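/- Two Motzkin paths P and Q of the same size n lie in the same connected component of the Hasse diagram of the poset (≤_M, M_n) if and only if cls(P) = cls(Q). In other words, the connected components of (≤_M, M_n) are exactly the sets of Motzkin paths of size n having a fixed class. -/

import Mathlib

/-- Steps: north `N = (0,1)`, east `E = (1,0)`, diagonal `D = (1,1)`. -/
inductive MStep : Type
  | N | E | D
  deriving DecidableEq

/-- The contribution of a step to the height `y - x` above the diagonal. -/
def MStep.hdiff : MStep → ℤ
  | .N => 1
  | .E => -1
  | .D => 0

/-- The total height change `y - x` along a word of steps. -/
def wsum (p : List MStep) : ℤ := (p.map MStep.hdiff).sum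

/-- A (nonempty) Motzkin path: starts at the origin, never goes below the
diagonal `y = x`, and ends on the diagonal. -/
def IsMotzkin (p : List MStep) : Prop :=
  p ≠ [] ∧ (∀ q, q <+: p → 0 ≤ wsum q) ∧ wsum p = 0

/-- A Dyck path is a Motzkin path with no diagonal step. -/
def IsDyck (p : List MStep) : Prop := IsMotzkin p ∧ MStep.D ∉ p

/-- A path is primitive if it touches the diagonal only at its endpoints. -/
def IsPrimitive (p : List MStep) : Prop :=
  IsMotzkin p ∧ ∀ q, q <+: p → q ≠ [] → q ≠ p → 0 < wsum q

/-- Covering relation for the Tamari-type order on Motzkin paths: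
`Q` covers `P` iff `P = P₁·E·P₂·P₃` and `Q = P₁·P₂·E·P₃` with `P₂` a nonempty
primitive Motzkin path. -/
def MCover (P Q : List MStep) : Prop :=
  ∃ P₁ P₂ P₃ : List MStep, IsMotzkin P₂ ∧ IsPrimitive P₂ ∧
    P = P₁ ++ [MStep.E] ++ P₂ ++ P₃ ∧ Q = P₁ ++ P₂ ++ [MStep.E] ++ P₃

/-- Covering relation of the Tamari order on Dyck paths. -/
def DCover (P Q : List MStep) : Prop :=
  ∃ P₁ P₂ P₃ : List MStep, IsDyck P₂ ∧ IsPrimitive P₂ ∧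
    P = P₁ ++ [MStep.E] ++ P₂ ++ P₃ ∧ Q = P₁ ++ P₂ ++ [MStep.E] ++ P₃

/-- The partial order `≤_M` on Motzkin paths. -/
def MLE : List MStep → List MStep → Prop := Relation.ReflTransGen MCover

/-- The Tamari order `≤_D` on Dyck paths. -/
def DLE : List MStep → List MStep → Prop := Relation.ReflTransGen DCover

/-- Heights of the diagonal steps along a path, starting from height `h`. -/
def clsFrom : List MStep → ℤ → List ℤ
  | [], _ => []
  | .N :: rest, h => clsFrom rest (h + 1)
  | .E :: rest, h => clsFrom rest h
  | .D :: rest, h => (h + 1) :: clsFrom rest (h + 1)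

/-- The class of a Motzkin path: the sequence of heights (ending `y`-coordinates)
of its diagonal steps, in the order they occur. -/
def cls (p : List MStep) : List ℤ := clsFrom p 0

/-- A path avoids `NNN` if it has no three consecutive north steps. -/
def AvoidsNNN (p : List MStep) : Prop := ¬ ([MStep.N, MStep.N, MStep.N] <:+: p)

/-- Callan's bijection `φ`: replace each factor `NE` by `D` and each factor
`NNE` by `N`, leaving remaining east steps unchanged. -/
def phi : List MStep → List MStep
  | [] => []
  | .N :: .N :: .E :: rest => .N :: phi rest
  | .N :: .E :: rest => .D :: phi rest
  | s :: rest => s :: phi rest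

/-- The inverse of `φ`: replace each `D` by `NE` and each `N` by `NNE`. -/
def psi : List MStep → List MStep
  | [] => []
  | .N :: rest => .N :: .N :: .E :: psi rest
  | .D :: rest => .N :: .E :: psi rest
  | .E :: rest => .E :: psi rest

/-- For each north step of the path (in order), record `N` if it is immediately
followed by an east step and `E` otherwise. -/
def typeRaw : List MStep → List MStep
  | [] => []
  | .N :: rest => (if rest.head? = some MStep.E then MStep.N else MStep.E) :: typeRaw rest
  | _ :: rest => typeRaw rest

/-- The type of a Dyck path of length `2n`: the word of length `n - 1` whose
`i`-th letter is `N` iff the `i`-th north step is immediately followed by an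
east step (the letter of the last north step is dropped). -/
def typeW (p : List MStep) : List MStep := (typeRaw p).dropLast

/-- `ds p` is the number of north steps of `p` that are neither immediately
preceded nor immediately followed by another north step. -/
def ds (p : List MStep) : ℕ :=
  ((Finset.range p.length).filter (fun i =>
    p[i]? = some MStep.N ∧ p[i + 1]? ≠ some MStep.N ∧
      (i = 0 ∨ p[i - 1]? ≠ some MStep.N))).card

/-- The number of contacts of a path with the diagonal `y = x` (lattice points
of the path lying on the diagonal, endpoints included). -/
def cont (p : List MStep) : ℕ :=
  ((Finset.range (p.length + 1)).filter (fun i => wsum (p.take i) = 0)).card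


/-
A cover moves an east step past a primitive path, which changes neither the length nor the
heights at which diagonal steps end, so each component lies inside one class. Conversely,
every path `A·E·s·B` with `s ≠ E` is covered, by pushing the `E` past the first-return
prefix of `s·B`; since the total distance of the east steps to the end strictly drops along
covers, repeated covers reach a path `w·Eᵐ` with `w` free of east steps. Such a path is
determined by its length `2m + #D` and its class, which records where the diagonal steps sit
among the north steps of `w`.
-/

open Relation

lemma exists_reflTransGen_of_decreasing {α : Type*} {r : α → α → Prop} {G : α → Prop}
    (f : α → ℕ) (hf : ∀ a b, r a b → f b < f a) (hG : ∀ a, ¬ G a → ∃ b, r a b) (a : α) :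
    ∃ b, ReflTransGen r a b ∧ G b := by
  obtain ⟨b, hab, hmin⟩ := (InvImage.wf f wellFounded_lt).has_min {b | ReflTransGen r a b}
    ⟨a, .refl⟩
  refine ⟨b, hab, by_contra fun hb => ?_⟩
  obtain ⟨c, hbc⟩ := hG b hb
  exact hmin c (hab.tail hbc) (hf b c hbc)

lemma Relation.EqvGen.apply_eq {α β : Type*} {r : α → α → Prop} {a b : α} (h : EqvGen r a b)
    (f : α → β) (hf : ∀ a b, r a b → f a = f b) : f a = f b :=
  congrArg (Quot.lift f hf) (Quot.eqvGen_sound h)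

namespace MStep

@[simp] lemma hdiff_N : N.hdiff = 1 := rfl
@[simp] lemma hdiff_E : E.hdiff = -1 := rfl
@[simp] lemma hdiff_D : D.hdiff = 0 := rfl

lemma neg_one_le_hdiff (s : MStep) : -1 ≤ s.hdiff := by
  cases s <;> simp

end MStep

open MStep

@[simp] lemma wsum_nil : wsum [] = 0 := rfl

@[simp] lemma wsum_cons (s : MStep) (p : List MStep) : wsum (s :: p) = s.hdiff + wsum p := by
  simp [wsum]

@[simp] lemma wsum_append (a b : List MStep) : wsum (a ++ b) = wsum a + wsum b := by
  simp [wsum]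

lemma wsum_eq_count_sub_count (p : List MStep) :
    wsum p = (p.count N : ℤ) - p.count E := by
  induction p with
  | nil => simp
  | cons s r ih => cases s <;> simp [ih] <;> ring

lemma count_N_add_count_E_add_count_D (p : List MStep) :
    p.count N + p.count E + p.count D = p.length := by
  induction p with
  | nil => simp
  | cons s r ih => cases s <;> simp [← ih] <;> omega

def StaysNonnegFrom (k : ℤ) (p : List MStep) : Prop := ∀ q, q <+: p → 0 ≤ k + wsum q

@[simp] lemma staysNonnegFrom_nil {k : ℤ} : StaysNonnegFrom k [] ↔ 0 ≤ k := by
  simp [StaysNonnegFrom]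

@[simp] lemma staysNonnegFrom_cons {k : ℤ} {s : MStep} {p : List MStep} :
    StaysNonnegFrom k (s :: p) ↔ 0 ≤ k ∧ StaysNonnegFrom (k + s.hdiff) p := by
  simp only [StaysNonnegFrom, List.prefix_cons_iff]
  constructor
  · intro h
    exact ⟨by simpa using h [] (.inl rfl), fun q hq => by
      simpa [add_assoc] using h (s :: q) (.inr ⟨q, rfl, hq⟩)⟩
  · rintro ⟨hk, hp⟩ q (rfl | ⟨t, rfl, ht⟩)
    · simpa using hk
    · simpa [add_assoc] using hp t ht

@[simp] lemma staysNonnegFrom_append {k : ℤ} {a b : List MStep} :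
    StaysNonnegFrom k (a ++ b) ↔ StaysNonnegFrom k a ∧ StaysNonnegFrom (k + wsum a) b := by
  induction a generalizing k with
  | nil => simpa using fun h : StaysNonnegFrom k b => by simpa using h [] List.nil_prefix
  | cons s r ih => simp [ih, add_assoc, and_assoc]

lemma StaysNonnegFrom.mono {k k' : ℤ} {p : List MStep} (h : StaysNonnegFrom k p)
    (hk : k ≤ k') : StaysNonnegFrom k' p :=
  fun q hq => (h q hq).trans (by omega)

lemma isMotzkin_iff {p : List MStep} :
    IsMotzkin p ↔ p ≠ [] ∧ StaysNonnegFrom 0 p ∧ wsum p = 0 := by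
  simp [IsMotzkin, StaysNonnegFrom]

lemma IsMotzkin.count_N_eq_count_E {p : List MStep} (h : IsMotzkin p) :
    p.count N = p.count E := by
  have := wsum_eq_count_sub_count p
  have := h.2.2
  omega

lemma IsMotzkin.count_E_lt_length {p : List MStep} (h : IsMotzkin p) :
    p.count E < p.length := by
  have := h.count_N_eq_count_E
  have := count_N_add_count_E_add_count_D p
  have : p.length ≠ 0 := fun h0 => h.1 (List.length_eq_zero_iff.mp h0)
  omega

namespace MCover

variable {P Q : List MStep}

lemma length_eq (h : MCover P Q) : P.length = Q.length := by
  obtain ⟨P₁, P₂, P₃, -, -, rfl, rfl⟩ := h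
  simp only [List.length_append, List.length_singleton]
  omega

lemma isMotzkin (h : MCover P Q) (hP : IsMotzkin P) : IsMotzkin Q := by
  obtain ⟨P₁, P₂, P₃, hM₂, -, rfl, rfl⟩ := h
  rw [isMotzkin_iff] at hP ⊢
  simp only [ne_eq, List.append_eq_nil_iff, staysNonnegFrom_append, staysNonnegFrom_cons,
    staysNonnegFrom_nil, wsum_append, wsum_cons, wsum_nil, hdiff_E, hM₂.2.2, zero_add,
    add_zero] at hP ⊢
  obtain ⟨-, ⟨⟨⟨h₁, -, hE⟩, h₂⟩, h₃⟩, hsum⟩ := hP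
  exact ⟨by simp, ⟨⟨⟨h₁, h₂.mono (by omega)⟩, by omega, hE⟩, h₃⟩, hsum⟩

end MCover

lemma clsFrom_append_E_cons (a b : List MStep) (h : ℤ) :
    clsFrom (a ++ E :: b) h = clsFrom (a ++ b) h := by
  induction a generalizing h with
  | nil => rfl
  | cons s r ih => cases s <;> simp [clsFrom, ih]

lemma clsFrom_append_replicate_E (w : List MStep) (m : ℕ) (h : ℤ) :
    clsFrom (w ++ List.replicate m E) h = clsFrom w h := by
  induction m with
  | zero => simp
  | succ m ih => rw [List.replicate_succ, clsFrom_append_E_cons, ih]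

lemma MCover.cls_eq {P Q : List MStep} (h : MCover P Q) : cls P = cls Q := by
  obtain ⟨P₁, P₂, P₃, -, -, rfl, rfl⟩ := h
  have hP : P₁ ++ [E] ++ P₂ ++ P₃ = P₁ ++ E :: (P₂ ++ P₃) := by simp
  have hQ : P₁ ++ P₂ ++ [E] ++ P₃ = (P₁ ++ P₂) ++ E :: P₃ := by simp
  rw [cls, cls, hP, hQ, clsFrom_append_E_cons, clsFrom_append_E_cons, List.append_assoc]

lemma length_clsFrom (p : List MStep) (h : ℤ) : (clsFrom p h).length = p.count D := by
  induction p generalizing h with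
  | nil => rfl
  | cons s r ih => cases s <;> simp [clsFrom, ih]

lemma lt_of_mem_clsFrom {p : List MStep} {h x : ℤ} (hx : x ∈ clsFrom p h) : h < x := by
  induction p generalizing h with
  | nil => simp [clsFrom] at hx
  | cons s r ih =>
    cases s with
    | N => exact (lt_add_one h).trans (ih hx)
    | E => exact ih hx
    | D =>
      rcases List.mem_cons.mp hx with rfl | hx
      · exact lt_add_one h
      · exact (lt_add_one h).trans (ih hx)

lemma eq_of_clsFrom_eq {w₁ w₂ : List MStep} {h : ℤ} (hE₁ : E ∉ w₁) (hE₂ : E ∉ w₂)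
    (hl : w₁.length = w₂.length) (hc : clsFrom w₁ h = clsFrom w₂ h) : w₁ = w₂ := by
  induction w₁ generalizing w₂ h with
  | nil => exact (List.length_eq_zero_iff.mp hl.symm).symm
  | cons s r ih =>
    obtain _ | ⟨t, r₂⟩ := w₂
    · simp at hl
    have hN_D : ∀ {u v : List MStep}, clsFrom u (h + 1) ≠ (h + 1) :: clsFrom v (h + 1) :=
      fun hc => lt_irrefl _ (lt_of_mem_clsFrom (by rw [hc]; exact List.mem_cons_self))
    simp only [List.mem_cons, not_or] at hE₁ hE₂
    simp only [List.length_cons, Nat.add_right_cancel_iff] at hl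
    cases s <;> cases t <;> simp only [clsFrom, List.cons.injEq, true_and] at hc ⊢
    all_goals first
      | exact ih hE₁.2 hE₂.2 hl hc
      | exact absurd rfl hE₁.1
      | exact absurd rfl hE₂.1
      | exact absurd hc hN_D
      | exact absurd hc.symm hN_D

lemma IsMotzkin.length_eq {p : List MStep} (h : IsMotzkin p) :
    p.length = 2 * p.count E + (cls p).length := by
  have := h.count_N_eq_count_E
  have := count_N_add_count_E_add_count_D p
  rw [cls, length_clsFrom]
  omega

/-- The maximal elements of `≤_M`. -/
def EastStepsAtEnd (p : List MStep) : Prop :=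
  ∃ w m, p = w ++ List.replicate m E ∧ E ∉ w

lemma EastStepsAtEnd.eq_of_cls_eq {P Q : List MStep} (hTP : EastStepsAtEnd P)
    (hTQ : EastStepsAtEnd Q) (hP : IsMotzkin P) (hQ : IsMotzkin Q)
    (hl : P.length = Q.length) (hc : cls P = cls Q) : P = Q := by
  obtain ⟨w₁, m₁, rfl, hw₁⟩ := hTP
  obtain ⟨w₂, m₂, rfl, hw₂⟩ := hTQ
  have hm : m₁ = m₂ := by
    have h₁ := hP.length_eq
    have h₂ := hQ.length_eq
    simp only [List.count_append, List.count_replicate_self, List.count_eq_zero.mpr hw₁,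
      List.count_eq_zero.mpr hw₂] at h₁ h₂
    rw [hl, hc] at h₁
    omega
  subst hm
  rw [eq_of_clsFrom_eq hw₁ hw₂ (by simpa using hl)
    (by simpa only [cls, clsFrom_append_replicate_E] using hc)]

def eastDistSum : List MStep → ℕ
  | [] => 0
  | .N :: r => eastDistSum r
  | .E :: r => r.length + 1 + eastDistSum r
  | .D :: r => eastDistSum r

lemma eastDistSum_append (a b : List MStep) :
    eastDistSum (a ++ b) = eastDistSum a + a.count E * b.length + eastDistSum b := by
  induction a with
  | nil => simp [eastDistSum]
  | cons s r ih =>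
    cases s <;> simp [eastDistSum, ih]
    ring

lemma MCover.eastDistSum_lt {P Q : List MStep} (h : MCover P Q) :
    eastDistSum Q < eastDistSum P := by
  obtain ⟨P₁, P₂, P₃, hM₂, -, rfl, rfl⟩ := h
  -- The moved `E` gets `|P₂|` closer to the end, each of the `#E(P₂) < |P₂|` east steps of `P₂`
  -- one step farther.
  have := hM₂.count_E_lt_length
  simp only [eastDistSum_append, List.count_append, List.count_singleton_self,
    List.length_singleton, eastDistSum, List.length_nil]
  linarith

lemma exists_prefix_first_hitting_zero (C : List MStep) {k : ℤ} (hk : 0 < k)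
    (hC : k + wsum C ≤ 0) :
    ∃ C₁ C₂, C = C₁ ++ C₂ ∧ k + wsum C₁ = 0 ∧ ∀ q, q <+: C₁ → q ≠ C₁ → 0 < k + wsum q := by
  induction C generalizing k with
  | nil => simp at hC; omega
  | cons t r ih =>
    by_cases ht : k + t.hdiff = 0
    · refine ⟨[t], r, rfl, by simpa using ht, fun q hq hne => ?_⟩
      rcases List.prefix_cons_iff.mp hq with rfl | ⟨u, rfl, hu⟩
      · simpa using hk
      · simp [List.prefix_nil.mp hu] at hne
    · have hk' : 0 < k + t.hdiff := by have := neg_one_le_hdiff t; omega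
      obtain ⟨C₁, C₂, rfl, h0, hpos⟩ := ih hk' (by simp at hC; linarith)
      refine ⟨t :: C₁, C₂, rfl, by simpa [add_assoc] using h0, fun q hq hne => ?_⟩
      rcases List.prefix_cons_iff.mp hq with rfl | ⟨u, rfl, hu⟩
      · simpa using hk
      · simpa [add_assoc] using hpos u hu (fun h => hne (h ▸ rfl))

lemma isPrimitive_N_cons {C : List MStep} (h0 : 1 + wsum C = 0)
    (hpos : ∀ q, q <+: C → q ≠ C → 0 < 1 + wsum q) : IsPrimitive (N :: C) := by
  have hpos' : ∀ q, q <+: N :: C → q ≠ [] → q ≠ N :: C → 0 < wsum q := by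
    rintro q hq hne hne'
    rcases List.prefix_cons_iff.mp hq with rfl | ⟨u, rfl, hu⟩
    · exact absurd rfl hne
    · simpa using hpos u hu (fun h => hne' (h ▸ rfl))
  refine ⟨⟨List.cons_ne_nil _ _, fun q hq => ?_, by simpa using h0⟩, hpos'⟩
  by_cases hq₀ : q = []
  · simp [hq₀]
  by_cases hq₁ : q = N :: C
  · simp [hq₁, h0]
  exact (hpos' q hq hq₀ hq₁).le

lemma isPrimitive_D : IsPrimitive [D] := by
  have hpre : ∀ q, q <+: [D] → q = [] ∨ q = [D] := fun q hq => by
    rcases List.prefix_cons_iff.mp hq with rfl | ⟨u, rfl, hu⟩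
    · exact .inl rfl
    · exact .inr (by rw [List.prefix_nil.mp hu])
  refine ⟨⟨List.cons_ne_nil _ _, fun q hq => ?_, rfl⟩, fun q hq h₁ h₂ => ?_⟩
  · rcases hpre q hq with rfl | rfl <;> simp
  · rcases hpre q hq with rfl | rfl <;> contradiction

lemma exists_isPrimitive_prefix {s : MStep} {B : List MStep} (hs : s ≠ E)
    (h : wsum (s :: B) ≤ 0) : ∃ P₂ P₃, s :: B = P₂ ++ P₃ ∧ IsPrimitive P₂ := by
  cases s with
  | N =>
    obtain ⟨C₁, C₂, rfl, h0, hpos⟩ :=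
      exists_prefix_first_hitting_zero B one_pos (by simpa using h)
    exact ⟨N :: C₁, C₂, rfl, isPrimitive_N_cons h0 hpos⟩
  | E => exact absurd rfl hs
  | D => exact ⟨[D], B, rfl, isPrimitive_D⟩

lemma exists_mcover_of_E_cons {A B : List MStep} {s : MStep}
    (hP : IsMotzkin (A ++ E :: s :: B)) (hs : s ≠ E) : ∃ Q, MCover (A ++ E :: s :: B) Q := by
  have hA := hP.2.1 (A ++ [E]) ⟨s :: B, by simp⟩
  have hsum := hP.2.2
  simp only [wsum_append, wsum_cons, hdiff_E, wsum_nil] at hA hsum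
  obtain ⟨P₂, P₃, hsB, hprim⟩ :=
    exists_isPrimitive_prefix (B := B) hs (by simp only [wsum_cons]; omega)
  exact ⟨A ++ P₂ ++ [E] ++ P₃, A, P₂, P₃, hprim.1, hprim, by simp [hsB], rfl⟩

lemma exists_E_cons_of_not_eastStepsAtEnd {p : List MStep} (h : ¬ EastStepsAtEnd p) :
    ∃ A s B, p = A ++ E :: s :: B ∧ s ≠ E := by
  induction p with
  | nil => exact absurd ⟨[], 0, rfl, by simp⟩ h
  | cons x r ih =>
    by_cases hr : EastStepsAtEnd r
    · obtain ⟨w, m, rfl, hw⟩ := hr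
      by_cases hx : x = E
      · subst hx
        obtain _ | ⟨y, w⟩ := w
        · exact absurd ⟨[], m + 1, by simp [List.replicate_succ], by simp⟩ h
        · exact ⟨[], y, w ++ List.replicate m E, rfl, fun hy => hw (by simp [hy])⟩
      · exact absurd ⟨x :: w, m, rfl, by simp [hw, Ne.symm hx]⟩ h
    · obtain ⟨A, s, B, rfl, hs⟩ := ih hr
      exact ⟨x :: A, s, B, rfl, hs⟩

lemma exists_mcover_of_not_eastStepsAtEnd {P : List MStep} (hP : IsMotzkin P)
    (h : ¬ EastStepsAtEnd P) : ∃ Q, MCover P Q := by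
  obtain ⟨A, s, B, rfl, hs⟩ := exists_E_cons_of_not_eastStepsAtEnd h
  exact exists_mcover_of_E_cons hP hs

/-- Two Motzkin paths of size `n` are in the same connected
component of the Hasse diagram of `(≤_M, M_n)` (i.e. joined by the equivalence
relation generated by the covering relation) iff they have the same class. -/
theorem same_component_iff_cls_eq (n : ℕ)
    (P Q : {p : List MStep // IsMotzkin p ∧ p.length = n}) :
    Relation.EqvGen
        (fun a b : {p : List MStep // IsMotzkin p ∧ p.length = n} => MCover a.1 b.1) P Q
      ↔ cls P.1 = cls Q.1 := by
  have cls_eq_of_eqvGen {R S : {p : List MStep // IsMotzkin p ∧ p.length = n}}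
      (h : EqvGen (fun a b => MCover a.1 b.1) R S) : cls R.1 = cls S.1 :=
    h.apply_eq (fun R => cls R.1) fun _ _ => MCover.cls_eq
  have reach_maximal (R : {p : List MStep // IsMotzkin p ∧ p.length = n}) :
      ∃ T, EqvGen (fun a b => MCover a.1 b.1) R T ∧ EastStepsAtEnd T.1 := by
    obtain ⟨T, hRT, hT⟩ := exists_reflTransGen_of_decreasing (r := fun a b => MCover a.1 b.1)
      (eastDistSum ·.1) (fun _ _ => MCover.eastDistSum_lt) (fun R hR => by
        obtain ⟨Q, hQ⟩ := exists_mcover_of_not_eastStepsAtEnd R.2.1 hR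
        exact ⟨⟨Q, hQ.isMotzkin R.2.1, hQ.length_eq.symm.trans R.2.2⟩, hQ⟩) R
    exact ⟨T, EqvGen.reflTransGen_le_eqvGen _ _ _ hRT, hT⟩
  refine ⟨cls_eq_of_eqvGen, fun hc => ?_⟩
  obtain ⟨S, hPS, hS⟩ := reach_maximal P
  obtain ⟨T, hQT, hT⟩ := reach_maximal Q
  obtain rfl : S = T := Subtype.ext <| hS.eq_of_cls_eq hT S.2.1 T.2.1 (S.2.2.trans T.2.2.symm)
    (by rw [← cls_eq_of_eqvGen hPS, ← cls_eq_of_eqvGen hQT, hc])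
  exact hPS.trans _ _ _ (hQT.symm _ _)
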